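/- Let n − 1 > d > 1 and Φ = [1 | J − 2X^T] be a {±1}-valued d×n matrix with X {0,1}-valued and ⟨φ_1,φ_j⟩ ≥ 0 for all columns φ_j. Then the columns of Φ form an ETF for R^d if and only if X is the incidence matrix of a QSD(v,k,λ,r,b,x,y) with v = d, b = n−1, k = (v−w)/2, w = sqrt(v(b+1−v)/b), r = bk/v, λ = r(k−1)/(v−1), x = (v−3w)/4, y = (v−w)/4. -/

import Mathlib

/-!
Write `φ₀ = 𝟙` and `φ_{j+1} = 𝟙 - 2 X_j` for the columns of `Φ`. Every inner product of these
`±1` vectors is affine in the design data: `⟨φ₀, φ_{j+1}⟩ = d - 2 k_j`,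
`⟨φ_{j+1}, φ_{j'+1}⟩ = d - 2 k_j - 2 k_{j'} + 4 |B_j ∩ B_{j'}|` and
`(Φ Φᵀ)_{i i'} = 1 + b - 2 r_i - 2 r_{i'} + 4 λ_{i i'}`.

If `Φ Φᵀ = α I`, the diagonal gives `α = b + 1`. Since `⟨φ₀, φ_{j+1}⟩ = γ ≥ 0`, the identity
`‖Φᵀ 𝟙‖² = 𝟙ᵀ Φ Φᵀ 𝟙` reads `d² + b γ² = d (b + 1)`, so `γ = w` (`w / d` is the Welch bound) and
all blocks have size `k`. The `i`-th entry of `Φ Φᵀ 𝟙 = α 𝟙` then yields `r`, the off-diagonal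
zeros of `Φ Φᵀ` yield `λ`, and `|⟨φ_{j+1}, φ_{j'+1}⟩| = w` leaves the two intersection numbers
`x, y`. Both occur: otherwise `X Xᵀ = (k - t) I + t J` with `0 ≤ t < k` would be positive definite
of size `b`, although its rank is at most `d < b`. The converse is the same computation read
backwards.
-/

open Finset Matrix

section SignVector
variable {ι : Type*} [Fintype ι]

lemma sum_one_sub_two_mul (u : ι → ℝ) :
    ∑ i, (1 - 2 * u i) = Fintype.card ι - 2 * ∑ i, u i := by
  simp [sum_sub_distrib, mul_sum]

lemma sum_one_sub_two_mul_mul_one_sub_two_mul (u v : ι → ℝ) :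
    ∑ i, (1 - 2 * u i) * (1 - 2 * v i)
      = Fintype.card ι - 2 * ∑ i, u i - 2 * ∑ i, v i + 4 * ∑ i, u i * v i := by
  simp only [show ∀ i, (1 - 2 * u i) * (1 - 2 * v i) = 1 - 2 * u i - 2 * v i + 4 * (u i * v i)
    from fun i => by ring, sum_add_distrib, sum_sub_distrib, ← mul_sum]
  simp

end SignVector

section TightFrame
variable {m n : Type*} [Fintype m] [Fintype n] [DecidableEq m]

def IsEquiangularTightFrame (Φ : Matrix m n ℝ) (c : ℝ) : Prop :=
  (∀ j, ∑ i, Φ i j ^ 2 = c) ∧ (∃ α : ℝ, 0 < α ∧ Φ * Φᵀ = α • 1) ∧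
    ∃ γ : ℝ, ∀ j j', j ≠ j' → |∑ i, Φ i j * Φ i j'| = γ

variable {Φ : Matrix m n ℝ} {α : ℝ}

lemma sum_mul_sum_col_of_mul_transpose_eq_smul_one (h : Φ * Φᵀ = α • 1) (i : m) :
    ∑ j, Φ i j * ∑ i', Φ i' j = α := by
  have hrow : ∑ i', (Φ * Φᵀ) i i' = α := by simp [h, Matrix.one_apply]
  simpa only [mul_apply, transpose_apply, mul_sum, sum_comm (γ := n)] using hrow

lemma sum_sq_sum_col_of_mul_transpose_eq_smul_one (h : Φ * Φᵀ = α • 1) :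
    ∑ j, (∑ i, Φ i j) ^ 2 = Fintype.card m * α := by
  simp_rw [sq, sum_mul, sum_comm (γ := n), sum_mul_sum_col_of_mul_transpose_eq_smul_one h]
  simp

end TightFrame

section Fisher
variable {m n : Type*} [Fintype m] [Fintype n]

lemma Matrix.mul_transpose_ne_smul_one_add_smul_of_card_lt [DecidableEq m] (X : Matrix m n ℝ)
    (hnm : Fintype.card n < Fintype.card m) {a t : ℝ} (ha : 0 < a) (ht : 0 ≤ t) :
    X * Xᵀ ≠ a • 1 + t • vecMulVec 1 1 := by
  intro h
  have hpos : (a • 1 + t • vecMulVec 1 1 : Matrix m m ℝ).PosDef :=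
    (PosDef.one.smul ha).add_posSemidef
      (by simpa using (posSemidef_vecMulVec_self_star (1 : m → ℝ)).smul ht)
  have hrank := (X.rank_mul_le_left Xᵀ).trans X.rank_le_card_width
  rw [h, rank_of_isUnit _ hpos.isUnit] at hrank
  omega

lemma exists_sum_mul_ne_of_card_lt (X : Matrix m n ℝ)
    (hnm : Fintype.card n < Fintype.card m) {k t : ℝ}
    (hk : ∀ j, ∑ i, X j i * X j i = k) (ht : 0 ≤ t) (htk : t < k) :
    ∃ j j', j ≠ j' ∧ ∑ i, X j i * X j' i ≠ t := by
  classical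
  by_contra! hall
  refine X.mul_transpose_ne_smul_one_add_smul_of_card_lt hnm (sub_pos.2 htk) ht ?_
  ext j j'
  rcases eq_or_ne j j' with rfl | hne
  · simp [mul_apply, hk]
  · simp [mul_apply, hne, hall j j' hne]

end Fisher

section Designs
variable {β P : Type*} [Fintype β] [Fintype P]

/-- Rows of `X` index the blocks, columns the points. -/
def IsQSDIncidence (X : Matrix β P ℝ) (k r lam x y : ℝ) : Prop :=
  (∀ j, ∑ i, X j i = k) ∧ (∀ i, ∑ j, X j i = r) ∧
    (∀ i i', i ≠ i' → ∑ j, X j i * X j i' = lam) ∧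
    (∀ j j', j ≠ j' → ∑ i, X j i * X j' i = x ∨ ∑ i, X j i * X j' i = y) ∧
    (∃ j j', j ≠ j' ∧ ∑ i, X j i * X j' i = x) ∧ (∃ j j', j ≠ j' ∧ ∑ i, X j i * X j' i = y)

lemma exists_sum_mul_eq_of_card_lt {X : Matrix β P ℝ} (h01 : ∀ j i, X j i = 0 ∨ X j i = 1)
    (hcard : Fintype.card P < Fintype.card β) {k x y : ℝ} (hblock : ∀ j, ∑ i, X j i = k)
    (hinter : ∀ j j', j ≠ j' → ∑ i, X j i * X j' i = x ∨ ∑ i, X j i * X j' i = y)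
    (hxk : x < k) (hy : 0 ≤ y) (hyk : y < k) :
    (∃ j j', j ≠ j' ∧ ∑ i, X j i * X j' i = x) ∧ (∃ j j', j ≠ j' ∧ ∑ i, X j i * X j' i = y) := by
  have hnorm : ∀ j, ∑ i, X j i * X j i = k := fun j => by
    rw [← hblock j]
    exact sum_congr rfl fun i _ => by rcases h01 j i with h | h <;> simp [h]
  obtain ⟨j₀, j₁, hne₀, h₀⟩ := exists_sum_mul_ne_of_card_lt X hcard hnorm hy hyk
  have hx₀ := (hinter j₀ j₁ hne₀).resolve_right h₀
  have hx : 0 ≤ x := hx₀ ▸ sum_nonneg fun i _ => by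
    rcases h01 j₀ i with h | h <;> rcases h01 j₁ i with h' | h' <;> simp [h, h']
  obtain ⟨j, j', hne, h⟩ := exists_sum_mul_ne_of_card_lt X hcard hnorm hx hxk
  exact ⟨⟨j₀, j₁, hne₀, hx₀⟩, ⟨j, j', hne, (hinter j j' hne).resolve_left h⟩⟩

lemma lt_of_mul_sq_eq {d b w : ℝ} (hd : 1 < d) (hb : 0 < b) (hw : b * w ^ 2 = d * (b + 1 - d)) :
    w < d := by
  by_contra! h
  have hsq : b * d ^ 2 ≤ b * w ^ 2 :=
    mul_le_mul_of_nonneg_left (pow_le_pow_left₀ (by linarith) h 2) hb.le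
  nlinarith [mul_pos (mul_pos (by linarith : 0 < d) (by linarith : 0 < d - 1))
    (by linarith : 0 < b + 1)]

lemma four_mul_lam_eq {d b w k r lam : ℝ} (hd : d ≠ 0) (hd1 : d ≠ 1)
    (hw : b * w ^ 2 = d * (b + 1 - d)) (hk : 2 * k = d - w) (hr : d * r = b * k)
    (hlam : (d - 1) * lam = r * (k - 1)) : 4 * lam = 4 * r - b - 1 := by
  have hd1' : d - 1 ≠ 0 := sub_ne_zero.2 hd1
  apply mul_left_cancel₀ (mul_ne_zero hd hd1')
  linear_combination
    (4 * d) * hlam + (4 * k - 4 * d) * hr + (b * (2 * k + d - w) - 2 * d * b) * hk + hw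

end Designs

section FlatFrame
variable {d b : ℕ} (X : Matrix (Fin b) (Fin d) ℝ)

def flatFrame : Matrix (Fin d) (Fin (b + 1)) ℝ := fun i => Fin.cons 1 fun j => 1 - 2 * X j i

@[simp] lemma flatFrame_zero (i : Fin d) : flatFrame X i 0 = 1 := rfl

@[simp] lemma flatFrame_succ (i : Fin d) (j : Fin b) : flatFrame X i j.succ = 1 - 2 * X j i := rfl

lemma sum_flatFrame_succ (j : Fin b) : ∑ i, flatFrame X i j.succ = d - 2 * ∑ i, X j i := by
  simpa using sum_one_sub_two_mul (X j)

lemma sum_flatFrame_mul_succ (j j' : Fin b) :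
    ∑ i, flatFrame X i j.succ * flatFrame X i j'.succ
      = d - 2 * ∑ i, X j i - 2 * ∑ i, X j' i + 4 * ∑ i, X j i * X j' i := by
  simp [sum_one_sub_two_mul_mul_one_sub_two_mul]

lemma flatFrame_mul_transpose_apply (i i' : Fin d) :
    (flatFrame X * (flatFrame X)ᵀ) i i'
      = 1 + (b - 2 * ∑ j, X j i - 2 * ∑ j, X j i' + 4 * ∑ j, X j i * X j i') := by
  simp [mul_apply, Fin.sum_univ_succ, sum_one_sub_two_mul_mul_one_sub_two_mul]

variable {X}

lemma sum_flatFrame_sq (h01 : ∀ j i, X j i = 0 ∨ X j i = 1) (j : Fin (b + 1)) :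
    ∑ i, flatFrame X i j ^ 2 = d := by
  have hsq : ∀ i, flatFrame X i j ^ 2 = 1 := fun i => by
    cases j using Fin.cases with
    | zero => simp
    | succ j => rcases h01 j i with h | h <;> norm_num [h]
  simp [hsq]

lemma flatFrame_mul_transpose_apply_self (h01 : ∀ j i, X j i = 0 ∨ X j i = 1) (i : Fin d) :
    (flatFrame X * (flatFrame X)ᵀ) i i = b + 1 := by
  have hsq : ∀ j, X j i * X j i = X j i := fun j => by rcases h01 j i with h | h <;> simp [h]
  rw [flatFrame_mul_transpose_apply, sum_congr rfl fun j _ => hsq j]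
  ring

lemma eq_of_flatFrame_mul_transpose_eq_smul_one (h01 : ∀ j i, X j i = 0 ∨ X j i = 1)
    (hd : 0 < d) {α : ℝ} (h : flatFrame X * (flatFrame X)ᵀ = α • 1) : α = b + 1 := by
  have hii := congr_fun₂ h ⟨0, hd⟩ ⟨0, hd⟩
  rw [flatFrame_mul_transpose_apply_self h01] at hii
  simpa using hii.symm

lemma sum_flatFrame_succ_eq_of_equiangular (hpos : ∀ j, 0 ≤ ∑ i, (1 - 2 * X j i)) {γ : ℝ}
    (hγ : ∀ j j', j ≠ j' → |∑ i, flatFrame X i j * flatFrame X i j'| = γ) (j : Fin b) :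
    ∑ i, flatFrame X i j.succ = γ := by
  have h0j := hγ 0 j.succ (Fin.succ_ne_zero j).symm
  simp only [flatFrame_zero, one_mul] at h0j
  rwa [abs_of_nonneg (show 0 ≤ ∑ i, flatFrame X i j.succ from hpos j)] at h0j

lemma sq_add_mul_sq_eq_of_flatFrame_mul_transpose {α γ : ℝ}
    (h : flatFrame X * (flatFrame X)ᵀ = α • 1) (hcol : ∀ j : Fin b, ∑ i, flatFrame X i j.succ = γ) :
    d ^ 2 + b * γ ^ 2 = d * α := by
  have hpot := sum_sq_sum_col_of_mul_transpose_eq_smul_one h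
  simp only [Fin.sum_univ_succ, hcol] at hpot
  simpa using hpot

lemma add_mul_sum_eq_of_flatFrame_mul_transpose {α γ : ℝ}
    (h : flatFrame X * (flatFrame X)ᵀ = α • 1) (hcol : ∀ j : Fin b, ∑ i, flatFrame X i j.succ = γ)
    (i : Fin d) : d + γ * (b - 2 * ∑ j, X j i) = α := by
  have hrow := sum_mul_sum_col_of_mul_transpose_eq_smul_one h i
  have hsum : ∑ j : Fin b, flatFrame X i j.succ = b - 2 * ∑ j, X j i := by
    simpa using sum_one_sub_two_mul (X · i)
  simp only [Fin.sum_univ_succ, hcol, ← sum_mul, hsum] at hrow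
  simpa [mul_comm γ] using hrow

end FlatFrame

section FlatETF
variable {d b : ℕ} {X : Matrix (Fin b) (Fin d) ℝ} {w k r lam x y : ℝ}

lemma abs_sum_flatFrame_mul_eq (hw : 0 ≤ w) (hk : 2 * k = d - w) (hx : 4 * x = d - 3 * w)
    (hy : 4 * y = d - w) (hblock : ∀ j, ∑ i, X j i = k)
    (hinter : ∀ j j', j ≠ j' → ∑ i, X j i * X j' i = x ∨ ∑ i, X j i * X j' i = y)
    (j j' : Fin (b + 1)) (hne : j ≠ j') : |∑ i, flatFrame X i j * flatFrame X i j'| = w := by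
  have hzero : ∀ j : Fin b, |∑ i, flatFrame X i 0 * flatFrame X i j.succ| = w := fun j => by
    simp only [flatFrame_zero, one_mul, sum_flatFrame_succ, hblock]
    rw [abs_of_nonneg] <;> linarith
  cases j using Fin.cases with
  | zero => cases j' using Fin.cases with
    | zero => exact absurd rfl hne
    | succ j' => exact hzero j'
  | succ j => cases j' using Fin.cases with
    | zero => simpa only [mul_comm] using hzero j
    | succ j' =>
      rw [sum_flatFrame_mul_succ, hblock, hblock]
      rcases hinter j j' (by simpa using hne) with h | h <;> rw [h]
      · rw [abs_of_nonpos] <;> linarith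
      · rw [abs_of_nonneg] <;> linarith

theorem isEquiangularTightFrame_flatFrame (h01 : ∀ j i, X j i = 0 ∨ X j i = 1) (hd : 1 < d)
    (hw : b * w ^ 2 = d * (b + 1 - d)) (hw₀ : 0 ≤ w) (hk : 2 * k = d - w) (hr : d * r = b * k)
    (hlam : (d - 1) * lam = r * (k - 1)) (hx : 4 * x = d - 3 * w) (hy : 4 * y = d - w)
    (hX : IsQSDIncidence X k r lam x y) : IsEquiangularTightFrame (flatFrame X) d := by
  obtain ⟨hblock, hrep, hpair, hinter, -, -⟩ := hX
  have hlam' := four_mul_lam_eq (by positivity) (by exact_mod_cast hd.ne') hw hk hr hlam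
  refine ⟨sum_flatFrame_sq h01, ⟨b + 1, by positivity, ?_⟩, w,
    abs_sum_flatFrame_mul_eq hw₀ hk hx hy hblock hinter⟩
  ext i i'
  rcases eq_or_ne i i' with rfl | hii'
  · simp [flatFrame_mul_transpose_apply_self h01]
  · simp only [flatFrame_mul_transpose_apply, hrep, hpair i i' hii', Matrix.smul_apply,
      Matrix.one_apply_ne hii', smul_zero]
    linarith

lemma eq_of_equiangular_flatFrame (hpos : ∀ j, 0 ≤ ∑ i, (1 - 2 * X j i)) (hb : 0 < b)
    (hw : b * w ^ 2 = d * (b + 1 - d)) (hw₀ : 0 ≤ w) {γ : ℝ}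
    (htight : flatFrame X * (flatFrame X)ᵀ = ((b : ℝ) + 1) • 1)
    (hγ : ∀ j j', j ≠ j' → |∑ i, flatFrame X i j * flatFrame X i j'| = γ) : γ = w := by
  have hcol := sum_flatFrame_succ_eq_of_equiangular hpos hγ
  have hγ₀ : 0 ≤ γ := hcol ⟨0, hb⟩ ▸ hpos ⟨0, hb⟩
  refine (sq_eq_sq₀ hγ₀ hw₀).1 (mul_left_cancel₀ (by positivity : (b : ℝ) ≠ 0) ?_)
  linarith [sq_add_mul_sq_eq_of_flatFrame_mul_transpose htight hcol]

lemma sum_col_eq_of_flatFrame_mul_transpose (hd : d ≠ 0) (hw : b * w ^ 2 = d * (b + 1 - d))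
    (hw₀ : w ≠ 0) (hk : 2 * k = d - w) (hr : d * r = b * k)
    (htight : flatFrame X * (flatFrame X)ᵀ = ((b : ℝ) + 1) • 1)
    (hcol : ∀ j : Fin b, ∑ i, flatFrame X i j.succ = w) (i : Fin d) : ∑ j, X j i = r := by
  have hrow := add_mul_sum_eq_of_flatFrame_mul_transpose htight hcol i
  have hdw : (d : ℝ) * (b - 2 * ∑ j, X j i) = b * w :=
    mul_left_cancel₀ hw₀ (by linear_combination d * hrow - hw)
  apply mul_left_cancel₀ (by positivity : (d : ℝ) ≠ 0)
  linear_combination -hdw / 2 - hr - b * hk / 2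

theorem isQSDIncidence_of_isEquiangularTightFrame (h01 : ∀ j i, X j i = 0 ∨ X j i = 1)
    (hpos : ∀ j, 0 ≤ ∑ i, (1 - 2 * X j i)) (hd : 1 < d) (hdb : d < b)
    (hw : b * w ^ 2 = d * (b + 1 - d)) (hw₀ : 0 < w) (hk : 2 * k = d - w) (hr : d * r = b * k)
    (hlam : (d - 1) * lam = r * (k - 1)) (hx : 4 * x = d - 3 * w) (hy : 4 * y = d - w)
    (hΦ : IsEquiangularTightFrame (flatFrame X) d) : IsQSDIncidence X k r lam x y := by
  obtain ⟨-, ⟨α, -, htight⟩, γ, hγ⟩ := hΦ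
  obtain rfl := eq_of_flatFrame_mul_transpose_eq_smul_one h01 (by omega) htight
  obtain rfl := (eq_of_equiangular_flatFrame hpos (by omega) hw hw₀.le htight hγ).symm
  have hcol := sum_flatFrame_succ_eq_of_equiangular hpos hγ
  have hblock (j : Fin b) : ∑ i, X j i = k := by linarith [sum_flatFrame_succ X j, hcol j]
  have hrep := sum_col_eq_of_flatFrame_mul_transpose (by omega) hw hw₀.ne' hk hr htight hcol
  have hinter (j j' : Fin b) (hne : j ≠ j') :
      ∑ i, X j i * X j' i = x ∨ ∑ i, X j i * X j' i = y := by
    have hjj' := hγ j.succ j'.succ (by simpa using hne)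
    rw [sum_flatFrame_mul_succ, hblock, hblock] at hjj'
    rcases (abs_eq hw₀.le).1 hjj' with h | h
    · right; linarith
    · left; linarith
  have hd' : (1 : ℝ) < d := by exact_mod_cast hd
  have hwd := lt_of_mul_sq_eq hd' (by exact_mod_cast (by omega : 0 < b)) hw
  have hlam' := four_mul_lam_eq (by positivity) hd'.ne' hw hk hr hlam
  refine ⟨hblock, hrep, fun i i' hii' => ?_, hinter,
    exists_sum_mul_eq_of_card_lt h01 (by simpa using hdb) hblock hinter (by linarith)
      (by linarith) (by linarith)⟩
  have hentry := congr_fun₂ htight i i'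
  simp only [flatFrame_mul_transpose_apply, hrep, Matrix.smul_apply, Matrix.one_apply_ne hii',
    smul_zero] at hentry
  linarith

end FlatETF

/-- Characterization of real flat ETFs: with `n = b + 1`, `n − 1 > d > 1`, let
`Φ = [1 | J − 2Xᵀ]` be a `{±1}`-valued `d × n` matrix with `X` `{0,1}`-valued and
`⟨φ₁, φ_j⟩ ≥ 0` for all columns.  The columns of `Φ` form an ETF for `ℝ^d` iff `X` is the
incidence matrix of a `QSD(v,k,λ,r,b,x,y)` with `v = d`, `b = n−1`, `k = (v−w)/2`,
`w = √(v(b+1−v)/b)`, `r = bk/v`, `λ = r(k−1)/(v−1)`, `x = (v−3w)/4`, `y = (v−w)/4`. -/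
theorem flat_etf_iff_qsd (d b : ℕ) (hd : 1 < d) (hdb : d < b)
    (X : Matrix (Fin b) (Fin d) ℝ)
    (h01 : ∀ j i, X j i = 0 ∨ X j i = 1)
    (hpos : ∀ j : Fin b, 0 ≤ ∑ i, (1 - 2 * X j i)) :
    (let Φ : Matrix (Fin d) (Fin (b + 1)) ℝ := fun i => Fin.cons 1 fun j => 1 - 2 * X j i
     (∀ j, ∑ i, Φ i j ^ 2 = (d : ℝ)) ∧
     (∃ α : ℝ, 0 < α ∧ Φ * Φ.transpose = α • 1) ∧
     (∃ γ : ℝ, ∀ j j' : Fin (b + 1), j ≠ j' → |∑ i, Φ i j * Φ i j'| = γ))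
    ↔
    (let w : ℝ := Real.sqrt ((d : ℝ) * ((b : ℝ) + 1 - d) / b)
     let k : ℝ := ((d : ℝ) - w) / 2
     let r : ℝ := (b : ℝ) * k / d
     let lam : ℝ := r * (k - 1) / ((d : ℝ) - 1)
     let x : ℝ := ((d : ℝ) - 3 * w) / 4
     let y : ℝ := ((d : ℝ) - w) / 4
     (∀ j, ∑ i, X j i = k) ∧
     (∀ i, ∑ j, X j i = r) ∧
     (∀ i i' : Fin d, i ≠ i' → ∑ j, X j i * X j i' = lam) ∧
     (∀ j j' : Fin b, j ≠ j' →
       (∑ i, X j i * X j' i = x ∨ ∑ i, X j i * X j' i = y)) ∧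
     (∃ j j', j ≠ j' ∧ ∑ i, X j i * X j' i = x) ∧
     (∃ j j', j ≠ j' ∧ ∑ i, X j i * X j' i = y)) := by
  have hd' : (1 : ℝ) < d := by exact_mod_cast hd
  have hdb' : (d : ℝ) < b := by exact_mod_cast hdb
  have hb : (b : ℝ) ≠ 0 := by linarith
  set w := √((d : ℝ) * (b + 1 - d) / b)
  have hw₀ : 0 < w := Real.sqrt_pos.2 (by apply div_pos <;> nlinarith)
  have hw : b * w ^ 2 = d * (b + 1 - d) := by
    rw [Real.sq_sqrt (by apply div_nonneg <;> nlinarith)]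
    field_simp
  have hd₀ : (d : ℝ) ≠ 0 := by positivity
  have hd₁ : (d : ℝ) - 1 ≠ 0 := by linarith
  exact ⟨isQSDIncidence_of_isEquiangularTightFrame h01 hpos hd hdb hw hw₀ (by ring)
      (mul_div_cancel₀ _ hd₀) (mul_div_cancel₀ _ hd₁) (by ring) (by ring),
    isEquiangularTightFrame_flatFrame h01 hd hw hw₀.le (by ring) (mul_div_cancel₀ _ hd₀)
      (mul_div_cancel₀ _ hd₁) (by ring) (by ring)⟩
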